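/- Let G be the simple graph on vertex set {0, 1, 2, 3, 4, 5, 6} whose edge set consists of the heptagon edges {{0,1}, {1,2}, {2,3}, {3,4}, {4,5}, {5,6}, {6,0}} together with the chords {{1,3}, {0,3}, {0,4}, {4,6}} (a triangulation of the heptagon, hence a maximal outerplanar graph of order 7). Then for every integer k ≥ 0, G is k-edge magic if and only if k ≡ 2 (mod 7). -/

import Mathlib

open scoped Classical in
/-- A finite simple graph `G` on a finite vertex type is `k`-edge magic if there is a
labeling of its edges that is a bijection onto `{k, k+1, ..., k+q-1}` (where `q` is the
number of edges) such that all the induced vertex sums (the sum of the labels of the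
edges incident to a vertex) are congruent modulo the number of vertices. -/
def IsKEdgeMagic {V : Type*} [Fintype V] (G : SimpleGraph V) (k : ℕ) : Prop :=
  ∃ f : Sym2 V → ℕ,
    Set.BijOn f G.edgeSet ((fun i => k + i) '' Set.Iio G.edgeFinset.card) ∧
    ∃ c : ZMod (Fintype.card V),
      ∀ v : V, ((∑ e ∈ G.incidenceFinset v, f e : ℕ) : ZMod (Fintype.card V)) = c

/-- A concrete simple graph on `Fin 7`. -/
def G7 : SimpleGraph (Fin 7) where
  Adj a b := a ≠ b ∧ s(a,b) ∈ ({s(0,1), s(1,2), s(2,3), s(3,4), s(4,5), s(5,6), s(6,0), s(1,3), s(0,3), s(0,4), s(4,6)} : Finset (Sym2 (Fin 7)))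
  symm := ⟨fun a b h => ⟨h.1.symm, by rw [show s(b,a) = s(a,b) from Sym2.eq_swap]; exact h.2⟩⟩
  loopless := ⟨fun a h => h.1 rfl⟩


/-!
Summing the vertex sums counts every edge label twice, so if they all agree modulo `p`, then
`p` divides twice the sum of the labels `k, …, k + q - 1`, that is `q (2k + q - 1)`; for
`p = 7`, `q = 11` this forces `k ≡ 2 (mod 7)`. Conversely, adding `p` to every label changes
each vertex sum by a multiple of `p`, so a `k`-edge-magic labelling yields a `(k + p)`-edge-magic
one, and an explicit labelling shows that the graph is `2`-edge-magic.
-/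

open Finset

namespace SimpleGraph

variable {V : Type*} [DecidableEq V] (G : SimpleGraph V)

theorem sum_sum_incidenceFinset_eq_two_nsmul [Fintype V] {M : Type*} [AddCommMonoid M]
    [Fintype G.edgeSet] [∀ v, Fintype (G.neighborSet v)] (f : Sym2 V → M) :
    ∑ v, ∑ e ∈ G.incidenceFinset v, f e = 2 • ∑ e ∈ G.edgeFinset, f e := by
  simp_rw [incidenceFinset_eq_filter, sum_filter]
  rw [sum_comm, smul_sum]
  refine sum_congr rfl fun e he => ?_
  rw [← sum_filter, sum_const,
    ← Sym2.card_toFinset_of_not_isDiag e (G.not_isDiag_of_mem_edgeSet (mem_edgeFinset.1 he))]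
  congr 2
  ext v
  simp [Sym2.mem_toFinset]

theorem edgeFinset_eq_toFinset [Fintype G.edgeSet] {l : List (Sym2 V)}
    (hG : G.edgeSet = {e | e ∈ l}) : G.edgeFinset = l.toFinset :=
  coe_injective (by rw [coe_edgeFinset, hG, List.coe_toFinset])

end SimpleGraph

theorem Set.BijOn.sum_eq_sum_range_add {α : Type*} {s : Finset α} {f : α → ℕ} {k q : ℕ}
    (hf : Set.BijOn f s ((fun i => k + i) '' Set.Iio q)) :
    ∑ a ∈ s, f a = ∑ i ∈ Finset.range q, (k + i) := by
  have ht : ((fun i => k + i) '' Set.Iio q) = ↑((Finset.range q).image (fun i => k + i)) := by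
    simp
  rw [ht] at hf
  calc ∑ a ∈ s, f a = ∑ b ∈ (Finset.range q).image (fun i => k + i), b :=
        sum_nbij f (fun a ha => hf.mapsTo ha) hf.injOn hf.surjOn fun _ _ => rfl
    _ = ∑ i ∈ Finset.range q, (k + i) := sum_image fun _ _ _ _ h => by simpa using h

theorem List.Nodup.bijOn_idxOf {α : Type*} [DecidableEq α] {l : List α} (hl : l.Nodup) :
    Set.BijOn (l.idxOf ·) {a | a ∈ l} (Set.Iio l.length) :=
  ⟨fun _ ha => List.idxOf_lt_length_iff.2 ha, fun _ ha _ _ h => (List.idxOf_inj ha).1 h,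
    fun i hi => ⟨l[i]'hi, List.getElem_mem hi, hl.idxOf_getElem i hi⟩⟩

namespace IsKEdgeMagic

variable {V : Type*} [Fintype V] {G : SimpleGraph V} {k : ℕ}

open scoped Classical in
theorem card_dvd (h : IsKEdgeMagic G k) :
    Fintype.card V ∣ #G.edgeFinset * (2 * k + #G.edgeFinset - 1) := by
  obtain ⟨f, hf, c, hc⟩ := h
  set q := #G.edgeFinset
  have hsum : ∑ e ∈ G.edgeFinset, f e = ∑ i ∈ Finset.range q, (k + i) :=
    Set.BijOn.sum_eq_sum_range_add (by rwa [SimpleGraph.coe_edgeFinset])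
  have hzero : ((∑ v, ∑ e ∈ G.incidenceFinset v, f e : ℕ) : ZMod (Fintype.card V)) = 0 := by
    rw [Nat.cast_sum]
    simp only [hc, sum_const, card_univ, nsmul_eq_mul, ZMod.natCast_self, zero_mul]
  have hlabels : 2 * ∑ i ∈ Finset.range q, (k + i) = q * (2 * k + q - 1) := by
    rw [sum_add_distrib, sum_const, card_range, smul_eq_mul, mul_add,
      mul_comm 2 (∑ i ∈ Finset.range q, i), sum_range_id_mul_two]
    rcases q with _ | q
    · simp
    · rw [show 2 * k + (q + 1) - 1 = 2 * k + q by omega, Nat.add_sub_cancel]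
      ring
  rwa [G.sum_sum_incidenceFinset_eq_two_nsmul, hsum, smul_eq_mul, hlabels,
    ZMod.natCast_eq_zero_iff] at hzero

theorem add_card (h : IsKEdgeMagic G k) : IsKEdgeMagic G (k + Fintype.card V) := by
  obtain ⟨f, hf, c, hc⟩ := h
  refine ⟨fun e => f e + Fintype.card V, ?_, c, fun v => ?_⟩
  · convert (add_left_injective (Fintype.card V)).injOn.bijOn_image.comp hf using 1
    · rfl
    · simp only [Set.image_image, add_right_comm]
  · rw [sum_add_distrib, sum_const, smul_eq_mul]
    push_cast
    rw [ZMod.natCast_self, mul_zero, add_zero]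
    exact_mod_cast hc v

theorem add_card_mul (h : IsKEdgeMagic G k) (m : ℕ) :
    IsKEdgeMagic G (k + Fintype.card V * m) := by
  induction m with
  | zero => simpa
  | succ m ih => simpa [mul_add, add_assoc] using ih.add_card

end IsKEdgeMagic

theorem IsKEdgeMagic.of_edgeSet_eq_list {V : Type*} [Fintype V] [DecidableEq V] {G : SimpleGraph V}
    {l : List (Sym2 V)} (hl : l.Nodup) (hG : G.edgeSet = {e | e ∈ l}) (k : ℕ)
    (c : ZMod (Fintype.card V))
    (hsums : ∀ v,
      ((∑ e ∈ l.toFinset with v ∈ e, (k + l.idxOf e) : ℕ) : ZMod (Fintype.card V)) = c) :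
    IsKEdgeMagic G k := by
  classical
  have hE := G.edgeFinset_eq_toFinset hG
  refine ⟨fun e => k + l.idxOf e, ?_, c, fun v => ?_⟩
  · rw [hE, List.toFinset_card_of_nodup hl, hG]
    exact (add_right_injective k).injOn.bijOn_image.comp hl.bijOn_idxOf
  · convert hsums v using 3
    rw [SimpleGraph.incidenceFinset_eq_filter, hE]
    congr

-- The edges in the order of their labels `2, 3, …, 12`; every vertex sum is then `≡ 0 (mod 7)`.
def G7.edgeList : List (Sym2 (Fin 7)) :=
  [s(0,1), s(1,2), s(2,3), s(6,0), s(0,4), s(3,4), s(0,3), s(1,3), s(4,5), s(5,6), s(4,6)]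

theorem G7.edgeSet_eq : G7.edgeSet = {e | e ∈ G7.edgeList} := by
  ext e
  induction e using Sym2.ind with
  | _ a b =>
    change (a ≠ b ∧ _) ↔ _
    revert a b
    decide

theorem G7.isKEdgeMagic_two : IsKEdgeMagic G7 2 :=
  .of_edgeSet_eq_list (by decide) G7.edgeSet_eq 2 0 (by decide)

open scoped Classical in
theorem G7.card_edgeFinset : #G7.edgeFinset = 11 := by
  rw [G7.edgeFinset_eq_toFinset G7.edgeSet_eq, List.toFinset_card_of_nodup (by decide)]
  rfl

theorem kEdgeMagic_iff_7 (k : ℕ) : IsKEdgeMagic G7 k ↔ k ≡ 2 [MOD 7] := by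
  constructor
  · intro h
    have h7 := h.card_dvd
    rw [Fintype.card_fin, G7.card_edgeFinset] at h7
    unfold Nat.ModEq
    omega
  · intro hk
    obtain ⟨m, rfl⟩ : ∃ m, k = 2 + 7 * m := ⟨k / 7, by unfold Nat.ModEq at hk; omega⟩
    exact G7.isKEdgeMagic_two.add_card_mul m
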